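/- For all natural numbers n ≥ λ ≥ 0 and every rational number z: Σ_{k=0}^{λ} φ(n, n−λ+k, k) · z^k = Σ_{π ∈ 𝒫_{n,λ}} Π_{k=1}^{n} (1/π(k)!) · f_k(z)^{π(k)}, where f_k(z) := (1/(2k)!)·(1 + z/(2k+1)). -/

import Mathlib

/-- Auxiliary array realizing the triangular field `φ` on natural-number indices. -/
def phiN : ℕ → ℕ → ℕ → ℚ
  | 0, j, k => if j = 0 ∧ k = 0 then 1 else 0
  | n + 1, j, k =>
    if k ≤ j ∧ j ≤ n + 1 then
      ((if _hk : k = 0 then 0 else ((n : ℚ) + 2 - (j : ℚ)) * phiN (n + 1) (j - 1) (k - 1))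
        + ((k : ℚ) + 1) * phiN n j (k + 1) + phiN n j k) / (2 * ((n : ℚ) + 1) + (k : ℚ))
    else 0
termination_by n j k => (n, j)

/-- The triangular field `φ(n,j,k)` of rational numbers: `φ(n,j,k) = 0` unless
`0 ≤ k ≤ j ≤ n`, `φ(0,0,0) = 1`, and for `0 ≤ k ≤ j ≤ n` with `(n,j,k) ≠ (0,0,0)`,
`(2n+k)·φ(n,j,k) = (n-j+1)·φ(n,j-1,k-1) + (k+1)·φ(n-1,j,k+1) + φ(n-1,j,k)`. -/
def phi (n j k : ℤ) : ℚ :=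
  if 0 ≤ n ∧ 0 ≤ j ∧ 0 ≤ k then phiN n.toNat j.toNat k.toNat else 0

/-- The component functions `f_k(z) = (1/(2k)!)·(1 + z/(2k+1))`. -/
def f (k : ℕ) (z : ℚ) : ℚ := (1 / (Nat.factorial (2 * k) : ℚ)) * (1 + z / (2 * (k : ℚ) + 1))


/-!
Let `F(t) = ∑_{k ≥ 1} f_k t^k`, a power series in `t` whose coefficients are polynomials of degree
at most one in a variable `x` (later evaluated at `z`); in closed form
`F = cosh √t - 1 + x (sinh √t / √t - 1)`.
Choosing the parts of a partition one at a time shows that `λ!` times the right-hand side is the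
coefficient of `t^n` in `F^λ`.

On the other hand `F` solves the first-order equation `2t F_t + (x + x² - t) F_x = x F + t`.
The left-hand side is a derivation, so `F^λ` solves the same equation with right-hand side
`λ x F^λ + λ t F^(λ-1)`. Comparing the coefficients of `t^n x^k` gives exactly the recurrence
defining `φ`, whence `λ! φ(n, n - λ + k, k)` is the coefficient of `t^n x^k` in `F^λ`.
-/

open Polynomial Finset

namespace Derivation

variable {A R : Type*} [CommSemiring A] [CommRing R] [Algebra A R]

noncomputable def mapPowerSeries (d : Derivation A R R) :
    Derivation A (PowerSeries R) (PowerSeries R) :=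
  Derivation.mk'
    { toFun := fun f => PowerSeries.mk fun n => d (PowerSeries.coeff n f)
      map_add' := fun f g => by ext n; simp
      map_smul' := fun a f => by ext n; simp }
    fun f g => by
      ext n
      rw [smul_eq_mul, smul_eq_mul, mul_comm g]
      simp [PowerSeries.coeff_mul, sum_add_distrib, mul_comm (PowerSeries.coeff _ g)]

@[simp] lemma coeff_mapPowerSeries (d : Derivation A R R) (f : PowerSeries R) (n : ℕ) :
    PowerSeries.coeff n (d.mapPowerSeries f) = d (PowerSeries.coeff n f) := by
  simp [mapPowerSeries]

@[simp] lemma constantCoeff_mapPowerSeries (d : Derivation A R R) (f : PowerSeries R) :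
    PowerSeries.constantCoeff (d.mapPowerSeries f) = d (PowerSeries.constantCoeff f) := by
  simp only [← PowerSeries.coeff_zero_eq_constantCoeff_apply, coeff_mapPowerSeries]

end Derivation

namespace PowerSeries

variable {A R : Type*} [CommSemiring A] [CommRing R] [Algebra A R]

noncomputable def transportDerivation (d : Derivation A R R) (a : R) :
    Derivation A (PowerSeries R) (PowerSeries R) :=
  (2 * X : PowerSeries R) • (derivative R).restrictScalars A + (C a - X) • d.mapPowerSeries

lemma constantCoeff_transportDerivation (d : Derivation A R R) (a : R) (g : PowerSeries R) :
    constantCoeff (transportDerivation d a g) = a * d (constantCoeff g) := by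
  simp [transportDerivation, mul_assoc]

lemma coeff_succ_transportDerivation (d : Derivation A R R) (a : R) (g : PowerSeries R) (n : ℕ) :
    coeff (n + 1) (transportDerivation d a g)
      = 2 * (n + 1) * coeff (n + 1) g + a * d (coeff (n + 1) g) - d (coeff n g) := by
  simp [transportDerivation, mul_assoc, sub_mul, coeff_derivative, ← map_ofNat C 2]
  ring

lemma coeff_mk_mul_of_eq_zero {S : Type*} [Semiring S] {a : ℕ → S} (ha : a 0 = 0)
    (g : PowerSeries S) (n : ℕ) :
    coeff n (mk a * g) = ∑ k ∈ Icc 1 n, a k * coeff (n - k) g := by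
  rw [coeff_mul, Nat.sum_antidiagonal_eq_sum_range_succ_mk, sum_range_succ',
    ← Finset.Ico_add_one_right_eq_Icc, sum_Ico_eq_sum_range]
  simp [ha, add_comm 1]

end PowerSeries

lemma Polynomial.coeff_X_mul_derivative {R : Type*} [Semiring R] (p : R[X]) (k : ℕ) :
    (X * derivative p).coeff k = k * p.coeff k := by
  rcases k with _ | k
  · simp
  · rw [coeff_X_mul, coeff_derivative, ← Nat.cast_succ, Nat.cast_comm]

namespace Nat.Partition

lemma mem_Icc_of_mem_parts {n k : ℕ} {π : n.Partition} (hk : k ∈ π.parts) : k ∈ Icc 1 n :=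
  mem_Icc.mpr ⟨π.parts_pos hk, π.parts_sum ▸ Multiset.le_sum_of_mem hk⟩

def insertPart {n k : ℕ} (hk : 0 < k) (hkn : k ≤ n) (π : (n - k).Partition) : n.Partition where
  parts := k ::ₘ π.parts
  parts_pos hi := (Multiset.mem_cons.mp hi).elim (· ▸ hk) π.parts_pos
  parts_sum := by rw [Multiset.sum_cons, π.parts_sum]; omega

def erasePart {n k : ℕ} (π : n.Partition) (hk : k ∈ π.parts) : (n - k).Partition where
  parts := π.parts.erase k
  parts_pos hi := π.parts_pos (Multiset.mem_of_mem_erase hi)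
  parts_sum := by
    have : k + (π.parts.erase k).sum = n := by
      rw [← Multiset.sum_cons, Multiset.cons_erase hk, π.parts_sum]
    omega

end Nat.Partition

section PartWeight

variable {K : Type*} [Field K] (a : ℕ → K)

def partWeight (s : Multiset ℕ) : K :=
  ∏ k ∈ s.toFinset, 1 / ((s.count k).factorial : K) * a k ^ s.count k

lemma partWeight_eq_prod_of_subset {s : Multiset ℕ} {t : Finset ℕ} (h : s.toFinset ⊆ t) :
    partWeight a s = ∏ k ∈ t, 1 / ((s.count k).factorial : K) * a k ^ s.count k :=
  prod_subset h fun k _ hk => by simp [Multiset.count_eq_zero.mpr (by simpa using hk)]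

def partSum (n l : ℕ) : K :=
  ∑ π ∈ univ.filter (fun π : n.Partition => π.parts.card = l), partWeight a π.parts

lemma count_mul_partWeight_cons [CharZero K] (k : ℕ) (s : Multiset ℕ) :
    ((k ::ₘ s).count k : K) * partWeight a (k ::ₘ s) = a k * partWeight a s := by
  have hs : s.toFinset ⊆ insert k s.toFinset := subset_insert _ _
  rw [partWeight_eq_prod_of_subset a (Multiset.toFinset_cons k s).le,
    partWeight_eq_prod_of_subset a hs, ← mul_prod_erase _ _ (mem_insert_self k _),
    ← mul_prod_erase _ _ (mem_insert_self k _)]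
  have hrest : ∀ i ∈ (insert k s.toFinset).erase k,
      1 / (((k ::ₘ s).count i).factorial : K) * a i ^ (k ::ₘ s).count i
        = 1 / ((s.count i).factorial : K) * a i ^ s.count i := fun i hi => by
    rw [Multiset.count_cons_of_ne (ne_of_mem_erase hi)]
  rw [prod_congr rfl hrest, Multiset.count_cons_self, Nat.factorial_succ]
  have : ((s.count k).factorial : K) ≠ 0 := Nat.cast_ne_zero.mpr (Nat.factorial_ne_zero _)
  field_simp
  push_cast
  ring

/-- Adding a part `k` to a partition multiplies its weight by `a k / π(k)`, where `π(k)` is the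
new multiplicity of `k`, and the multiplicities of a partition with `l + 1` parts sum to `l + 1`. -/
lemma sum_mul_partSum [CharZero K] (n l : ℕ) :
    ∑ k ∈ Icc 1 n, a k * partSum a (n - k) l = (l + 1) * partSum a n (l + 1) := by
  calc _ = ∑ p ∈ (Icc 1 n).sigma fun k =>
            univ.filter fun π : (n - k).Partition => π.parts.card = l,
          a p.1 * partWeight a p.2.parts := by
        rw [sum_sigma]
        simp_rw [partSum, mul_sum]
    _ = ∑ q ∈ (univ.filter fun π : n.Partition => π.parts.card = l + 1).sigma
            (·.parts.toFinset),
          (q.1.parts.count q.2 : K) * partWeight a q.1.parts := by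
        refine sum_bij'
          (fun p hp => ⟨.insertPart (mem_Icc.mp (mem_sigma.mp hp).1).1
            (mem_Icc.mp (mem_sigma.mp hp).1).2 p.2, p.1⟩)
          (fun q hq => ⟨q.2, q.1.erasePart (Multiset.mem_toFinset.mp (mem_sigma.mp hq).2)⟩)
          ?_ ?_ ?_ ?_ ?_
        · rintro ⟨k, π⟩ hp
          simp only [mem_sigma, mem_filter, mem_univ, true_and] at hp ⊢
          simp [Nat.Partition.insertPart, hp.2]
        · rintro ⟨π, k⟩ hq
          simp only [mem_sigma, mem_filter, mem_univ, true_and, Multiset.mem_toFinset] at hq ⊢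
          refine ⟨Nat.Partition.mem_Icc_of_mem_parts hq.2, ?_⟩
          simp [Nat.Partition.erasePart, Multiset.card_erase_of_mem hq.2, hq.1]
        · rintro ⟨k, π⟩ -
          exact Sigma.ext rfl (heq_of_eq (Nat.Partition.ext (Multiset.erase_cons_head _ _)))
        · rintro ⟨π, k⟩ hq
          exact Sigma.ext (Nat.Partition.ext (Multiset.cons_erase
            (Multiset.mem_toFinset.mp (mem_sigma.mp hq).2))) HEq.rfl
        · rintro ⟨k, π⟩ -
          exact (count_mul_partWeight_cons a k π.parts).symm
    _ = _ := by
        rw [sum_sigma, partSum, mul_sum]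
        refine sum_congr rfl fun π hπ => ?_
        dsimp only
        rw [← sum_mul, ← Nat.cast_sum, Multiset.toFinset_sum_count_eq, (mem_filter.mp hπ).2]
        push_cast
        rfl

lemma factorial_mul_partSum [CharZero K] (ha : a 0 = 0) (n l : ℕ) :
    (l.factorial : K) * partSum a n l = PowerSeries.coeff n (PowerSeries.mk a ^ l) := by
  induction l generalizing n with
  | zero =>
    rcases n with _ | n
    · simp [partSum, partWeight]
    · rw [partSum, filter_eq_empty_iff.mpr fun π _ h => by
        simpa [Multiset.card_eq_zero.mp h] using π.parts_sum]
      simp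
  | succ l ih =>
    rw [pow_succ', PowerSeries.coeff_mk_mul_of_eq_zero ha, Nat.factorial_succ, Nat.cast_mul,
      mul_comm _ (l.factorial : K), mul_assoc, Nat.cast_succ, ← sum_mul_partSum, mul_sum]
    refine sum_congr rfl fun k _ => ?_
    rw [← ih, mul_left_comm]

lemma partWeight_eq_prod_Icc {n : ℕ} (π : n.Partition) :
    partWeight a π.parts
      = ∏ k ∈ Icc 1 n, 1 / ((π.parts.count k).factorial : K) * a k ^ π.parts.count k :=
  partWeight_eq_prod_of_subset a fun _ hk =>
    Nat.Partition.mem_Icc_of_mem_parts (Multiset.mem_toFinset.mp hk)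

end PartWeight

noncomputable def fPoly (k : ℕ) : ℚ[X] :=
  C (1 / ((2 * k).factorial : ℚ)) + C (1 / ((2 * k + 1).factorial : ℚ)) * X

lemma eval_fPoly (k : ℕ) (z : ℚ) : (fPoly k).eval z = f k z := by
  have : ((2 * k + 1).factorial : ℚ) = (2 * k + 1) * (2 * k).factorial := by
    push_cast [Nat.factorial_succ]; ring
  simp [fPoly, f, this]
  field_simp

lemma derivative_fPoly (k : ℕ) :
    derivative (fPoly k) = C (1 / ((2 * k + 1).factorial : ℚ)) := by
  simp [fPoly]

lemma natDegree_fPoly_le (k : ℕ) : (fPoly k).natDegree ≤ 1 := by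
  rw [fPoly, add_comm]
  exact natDegree_linear_le

lemma fPoly_succ_transport (m : ℕ) :
    (2 * (m + 1) : ℚ[X]) * fPoly (m + 1) + (X + X ^ 2) * derivative (fPoly (m + 1))
      - X * fPoly (m + 1) = derivative (fPoly m) := by
  have h₁ : ((2 * (m + 1)).factorial : ℚ) = (2 * m + 2) * (2 * m + 1).factorial := by
    rw [show 2 * (m + 1) = 2 * m + 1 + 1 by ring, Nat.factorial_succ]; push_cast; ring
  have h₂ : ((2 * (m + 1) + 1).factorial : ℚ) = (2 * m + 3) * (2 * (m + 1)).factorial := by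
    rw [Nat.factorial_succ]; push_cast; ring
  refine Polynomial.funext fun x => ?_
  rw [derivative_fPoly, derivative_fPoly]
  simp only [fPoly, h₂, h₁, eval_add, eval_one, eval_sub, eval_mul, eval_C, eval_X,
    eval_pow, eval_ofNat, eval_natCast]
  field_simp
  ring

noncomputable def fSeries : PowerSeries ℚ[X] :=
  PowerSeries.mk fun k => if k = 0 then 0 else fPoly k

lemma coeff_fSeries (k : ℕ) :
    PowerSeries.coeff k fSeries = if k = 0 then 0 else fPoly k :=
  PowerSeries.coeff_mk _ _

lemma constantCoeff_fSeries : PowerSeries.constantCoeff fSeries = 0 := by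
  simpa using coeff_fSeries 0

lemma transportDerivation_fSeries :
    PowerSeries.transportDerivation derivative' (X + X ^ 2) fSeries
      = PowerSeries.C X * fSeries + PowerSeries.X := by
  refine PowerSeries.ext fun n => ?_
  rcases n with _ | n
  · simp [PowerSeries.constantCoeff_transportDerivation, constantCoeff_fSeries]
  · have hf₀ : derivative (PowerSeries.coeff n fSeries) + (if n = 0 then 1 else 0)
        = derivative (fPoly n) := by
      rcases n with _ | n <;> simp [coeff_fSeries, derivative_fPoly]
    simp only [PowerSeries.coeff_succ_transportDerivation, derivative'_apply, map_add,
      PowerSeries.coeff_C_mul, PowerSeries.coeff_X, coeff_fSeries, if_neg n.succ_ne_zero,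
      add_eq_right] at hf₀ ⊢
    linear_combination fPoly_succ_transport n - hf₀

lemma transportDerivation_fSeries_pow (l : ℕ) :
    PowerSeries.transportDerivation derivative' (X + X ^ 2) (fSeries ^ l)
      = l • (PowerSeries.C X * fSeries ^ l + PowerSeries.X * fSeries ^ (l - 1)) := by
  rw [Derivation.leibniz_pow, transportDerivation_fSeries]
  rcases l with _ | l
  · simp
  · simp only [smul_eq_mul, Nat.add_sub_cancel, pow_succ]
    ring

noncomputable def powCoeff (n l : ℕ) : ℚ[X] := PowerSeries.coeff n (fSeries ^ l)

lemma eval_powCoeff (n l : ℕ) (z : ℚ) :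
    (powCoeff n l).eval z
      = PowerSeries.coeff n (PowerSeries.mk (fun k => if k = 0 then 0 else f k z) ^ l) := by
  have hmap : PowerSeries.map (evalRingHom z) fSeries
      = PowerSeries.mk fun k => if k = 0 then 0 else f k z := by
    ext (_ | k) <;> simp [coeff_fSeries, eval_fPoly]
  rw [← hmap, ← map_pow, PowerSeries.coeff_map, powCoeff, coe_evalRingHom]

lemma powCoeff_transport (n l : ℕ) :
    (2 * (n + 1) : ℚ[X]) * powCoeff (n + 1) l + (X + X ^ 2) * derivative (powCoeff (n + 1) l)
        - derivative (powCoeff n l)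
      = (l : ℚ[X]) * (X * powCoeff (n + 1) l + powCoeff n (l - 1)) := by
  have h := PowerSeries.coeff_succ_transportDerivation derivative' (X + X ^ 2) (fSeries ^ l) n
  rw [transportDerivation_fSeries_pow, map_nsmul, map_add, PowerSeries.coeff_C_mul,
    PowerSeries.coeff_succ_X_mul, nsmul_eq_mul] at h
  exact h.symm

lemma coeff_powCoeff_succ (n l k : ℕ) :
    (2 * (n + 1) + k : ℚ) * (powCoeff (n + 1) l).coeff k
      = (if k = 0 then 0 else ((l : ℚ) + 1 - k) * (powCoeff (n + 1) l).coeff (k - 1))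
        + (k + 1) * (powCoeff n l).coeff (k + 1) + l * (powCoeff n (l - 1)).coeff k := by
  have h := congrArg (Polynomial.coeff · k) (powCoeff_transport n l)
  rcases k with _ | k
  · simp [coeff_derivative, add_mul] at h ⊢
    linarith
  · simp [coeff_derivative, coeff_X_mul, coeff_X_mul_derivative, add_mul, pow_two, mul_assoc]
      at h ⊢
    linear_combination h

lemma powCoeff_eq_zero_of_lt {n l : ℕ} (h : n < l) : powCoeff n l = 0 := by
  have hX : (PowerSeries.X : PowerSeries ℚ[X]) ∣ fSeries :=
    PowerSeries.X_dvd_iff.mpr constantCoeff_fSeries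
  exact PowerSeries.X_pow_dvd_iff.mp (pow_dvd_pow_of_dvd hX l) n h

lemma natDegree_powCoeff_le (n l : ℕ) : (powCoeff n l).natDegree ≤ l := by
  induction l generalizing n with
  | zero =>
    rw [powCoeff, pow_zero, PowerSeries.coeff_one]
    split_ifs <;> simp
  | succ l ih =>
    rw [powCoeff, pow_succ', PowerSeries.coeff_mul, add_comm]
    refine natDegree_sum_le_of_forall_le _ _ fun p _ =>
      natDegree_mul_le.trans (add_le_add ?_ (ih _))
    rw [coeff_fSeries]
    split_ifs
    · simp
    · exact natDegree_fPoly_le _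

lemma coeff_powCoeff_eq_zero {n j k : ℕ} (hj : j ≤ n + k) (h : ¬(k ≤ j ∧ j ≤ n)) :
    (powCoeff n (n + k - j)).coeff k = 0 := by
  rcases not_and_or.mp h with h | h
  · rw [powCoeff_eq_zero_of_lt (by omega), coeff_zero]
  · exact coeff_eq_zero_of_natDegree_lt ((natDegree_powCoeff_le _ _).trans_lt (by omega))

lemma phiN_eq_zero {n j k : ℕ} (h : ¬(k ≤ j ∧ j ≤ n)) : phiN n j k = 0 := by
  rcases n with _ | n
  · rw [phiN, if_neg (by omega)]
  · rw [phiN, if_neg h]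

lemma factorial_mul_phiN (n j k : ℕ) (hj : j ≤ n + k) :
    ((n + k - j).factorial : ℚ) * phiN n j k = (powCoeff n (n + k - j)).coeff k := by
  induction n, j, k using phiN.induct with
  | case1 j k h =>
    obtain ⟨rfl, rfl⟩ := h
    simp [phiN, powCoeff]
  | case2 j k h =>
    rw [phiN_eq_zero (by omega), coeff_powCoeff_eq_zero hj (by omega), mul_zero]
  | case4 n j k h =>
    rw [phiN_eq_zero h, coeff_powCoeff_eq_zero hj h, mul_zero]
  | case3 n j k h ih₁ ih₂ ih₃ =>
    obtain ⟨l, hl⟩ : ∃ l, l = n + 1 + k - j := ⟨_, rfl⟩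
    rw [← hl]
    have h₁ : (l.factorial : ℚ)
          * (if k = 0 then 0 else ((n : ℚ) + 2 - j) * phiN (n + 1) (j - 1) (k - 1))
        = if k = 0 then 0 else ((l : ℚ) + 1 - k) * (powCoeff (n + 1) l).coeff (k - 1) := by
      split_ifs with hk
      · rw [mul_zero]
      · have hcoeff : (n : ℚ) + 2 - j = l + 1 - k := by
          rw [hl, Nat.cast_sub (by omega)]
          push_cast
          ring
        have ih := ih₁ hk (by omega)
        rw [show n + 1 + (k - 1) - (j - 1) = l by omega] at ih
        rw [← ih, hcoeff]
        ring
    have h₂ : (l.factorial : ℚ) * phiN n j (k + 1) = (powCoeff n l).coeff (k + 1) := by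
      have ih := ih₂ (by omega)
      rwa [show n + (k + 1) - j = l by omega] at ih
    have h₃ : (l.factorial : ℚ) * phiN n j k = l * (powCoeff n (l - 1)).coeff k := by
      rcases Nat.eq_zero_or_pos l with hl₀ | hl₀
      · rw [phiN_eq_zero (by omega), hl₀]
        simp
      · have ih := ih₃ (by omega)
        rw [show n + k - j = l - 1 by omega] at ih
        rw [← ih, ← Nat.mul_factorial_pred hl₀.ne']
        push_cast
        ring
    rw [phiN, if_pos h, dite_eq_ite, mul_div_assoc', div_eq_iff (by positivity)]
    linear_combination h₁ + (k + 1) * h₂ + h₃ - coeff_powCoeff_succ n l k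

/-- The generating function identity: for `n ≥ λ ≥ 0`,
`∑_{k=0}^{λ} φ(n, n-λ+k, k)·z^k = ∑_{π ∈ 𝒫_{n,λ}} ∏_{k=1}^{n} (1/π(k)!)·f_k(z)^{π(k)}`,
where `𝒫_{n,λ}` is the set of partitions of `n` with `λ` parts and `π(k)` is the
frequency (multiplicity) of the part `k` in `π`. -/
theorem stmt16 (n l : ℕ) (hl : l ≤ n) (z : ℚ) :
    ∑ k ∈ Finset.range (l + 1), phi (n : ℤ) ((n : ℤ) - (l : ℤ) + (k : ℤ)) (k : ℤ) * z ^ k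
      = ∑ π ∈ Finset.univ.filter (fun π : Nat.Partition n => Multiset.card π.parts = l),
          ∏ k ∈ Finset.Icc 1 n,
            (1 / (Nat.factorial (Multiset.count k π.parts) : ℚ))
              * f k z ^ (Multiset.count k π.parts) := by
  have hphi : ∀ k : ℕ,
      phi n (n - l + k) k * z ^ k = (powCoeff n l).coeff k * z ^ k / l.factorial := by
    intro k
    have h := factorial_mul_phiN n (n - l + k) k (by omega)
    rw [show n + k - (n - l + k) = l by omega] at h
    rw [phi, if_pos (by omega), show ((n : ℤ) - l + k).toNat = n - l + k by omega,
      Int.toNat_natCast, Int.toNat_natCast, ← h]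
    field_simp
  rw [sum_congr rfl fun k _ => hphi k, ← sum_div,
    ← eval_eq_sum_range' ((natDegree_powCoeff_le n l).trans_lt l.lt_succ_self), eval_powCoeff,
    ← factorial_mul_partSum _ (by simp), mul_div_cancel_left₀ _ (by positivity), partSum]
  refine sum_congr rfl fun π _ =>
    (partWeight_eq_prod_Icc _ π).trans (prod_congr rfl fun k hk => ?_)
  rw [if_neg (Nat.pos_iff_ne_zero.mp (mem_Icc.mp hk).1)]
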